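/- Let β₁, β₂ ∈ (0,1) satisfy β₁(2−β₂) < 1. Then the invariant set A₁ = [0,1] × {1} has a locally riddled basin: there exists a relatively open set U ⊆ [0,1]² containing A₁ such that for every point p ∈ A₁ and every ε > 0, the set of points q ∈ [0,1]² with dist(q,p) < ε and Fⁿ(q) ∉ U for some n ≥ 0 has positive two-dimensional Lebesgue measure. -/

import Mathlib

/-!
Take `U = {y > (1 + β₂)/2}`. Near `(t, 1)`, choose a dyadic interval of length `2⁻ᵏ` containing
`t` and inside it the subinterval whose image under `fᵏ` lies within `2⁻ᴺ` of `1`, and heights `y`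
slightly below `1`. In the first `k` steps the distance `1 - y` shrinks at most by the factor
`β₁(1 - β₂)` per step, so it stays above some `η > 0`; in the next `N` steps the base point lies in
`(1/2, 1]`, so only `g₂` acts, and `g₂` lowers every height in `[(1 + β₂)/2, 1 - η]` by a fixed
amount. For `N` large this leaves `U`, on a box of positive area.
-/

open MeasureTheory Filter Set

noncomputable section

/-- The fiber map `g₁,β(y) = y + y(1-y)(y-β)`. -/
def g1 (β y : ℝ) : ℝ := y + y * (1 - y) * (y - β)

/-- The fiber map `g₂,β(y) = y - y(1-y)(y-β)`. -/
def g2 (β y : ℝ) : ℝ := y - y * (1 - y) * (y - β)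

/-- The doubling map on `[0,1]`. -/
def dbl (x : ℝ) : ℝ := if x ≤ 1/2 then 2*x else 2*x - 1

/-- The skew product `F(x,y) = (f(x), g₁,β₁(y))` for `x ≤ 1/2` and
`F(x,y) = (f(x), g₂,β₂(y))` for `x > 1/2`. -/
def Fsk (β1 β2 : ℝ) (p : ℝ × ℝ) : ℝ × ℝ :=
  if p.1 ≤ 1/2 then (dbl p.1, g1 β1 p.2) else (dbl p.1, g2 β2 p.2)

/-- The unit square `[0,1]²`. -/
def unitSq : Set (ℝ × ℝ) := Set.Icc (0:ℝ) 1 ×ˢ Set.Icc (0:ℝ) 1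

/-- The basin of points of `[0,1]²` whose second coordinate tends to `c` under iteration
of the skew product. -/
def basin (β1 β2 c : ℝ) : Set (ℝ × ℝ) :=
  {p | p ∈ unitSq ∧ Tendsto (fun n : ℕ => ((Fsk β1 β2)^[n] p).2) atTop (nhds c)}

/-- The invariant set `A₁ = [0,1] × {1}`. -/
def A1 : Set (ℝ × ℝ) := Set.Icc (0:ℝ) 1 ×ˢ ({1} : Set ℝ)

section FiberMaps

variable {β y : ℝ}

lemma one_sub_g1_ge (hβ : β ≤ 1) (hy : 0 ≤ y) : β * (1 - y) ≤ 1 - g1 β y := by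
  have key : 1 - g1 β y - β * (1 - y) = (1 - y) ^ 2 * (1 + y - β) := by unfold g1; ring
  linarith [mul_nonneg (sq_nonneg (1 - y)) (by linarith : (0:ℝ) ≤ 1 + y - β)]

lemma one_sub_g2_ge (hβ : 0 ≤ β) (hy : y ≤ 1) : (1 - β) * (1 - y) ≤ 1 - g2 β y := by
  have key : 1 - g2 β y - (1 - β) * (1 - y) = (1 - y) * (y ^ 2 + β * (1 - y)) := by
    unfold g2; ring
  linarith [mul_nonneg (sub_nonneg.2 hy) (add_nonneg (sq_nonneg y)
    (mul_nonneg hβ (sub_nonneg.2 hy)))]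

lemma g1_mem_Icc (hβ : β ∈ Icc (0:ℝ) 1) (hy : y ∈ Icc (0:ℝ) 1) : g1 β y ∈ Icc (0:ℝ) 1 := by
  obtain ⟨hβ0, hβ1⟩ := hβ
  obtain ⟨hy0, hy1⟩ := hy
  have key : g1 β y = y * ((1 - β) + y * (1 - y) + β * y) := by unfold g1; ring
  refine ⟨?_, ?_⟩
  · rw [key]; have := mul_nonneg hy0 (sub_nonneg.2 hy1); positivity
  · nlinarith [one_sub_g1_ge hβ1 hy0, mul_nonneg hβ0 (sub_nonneg.2 hy1)]

lemma g2_mem_Icc (hβ : β ∈ Icc (0:ℝ) 1) (hy : y ∈ Icc (0:ℝ) 1) : g2 β y ∈ Icc (0:ℝ) 1 := by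
  obtain ⟨hβ0, hβ1⟩ := hβ
  obtain ⟨hy0, hy1⟩ := hy
  have key : g2 β y = y * ((1 - y) + β * (1 - y) + y ^ 2) := by unfold g2; ring
  refine ⟨?_, ?_⟩
  · rw [key]; have := sub_nonneg.2 hy1; positivity
  · nlinarith [one_sub_g2_ge hβ0 hy1, mul_nonneg (sub_nonneg.2 hβ1) (sub_nonneg.2 hy1)]

lemma g2_le_of_le (hβ : β ∈ Icc (0:ℝ) 1) (hy : y ∈ Icc 0 ((1 + β) / 2)) :
    g2 β y ≤ (1 + β) / 2 := by
  obtain ⟨hβ0, hβ1⟩ := hβ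
  obtain ⟨hy0, hyc⟩ := hy
  have hy1 : y ≤ 1 := by linarith
  have hy_one_sub : y * (1 - y) ≤ 1 := by nlinarith
  unfold g2
  rcases le_or_gt y β with h | h
  · nlinarith [mul_le_mul_of_nonneg_right hy_one_sub (sub_nonneg.2 h)]
  · nlinarith [mul_nonneg (mul_nonneg hy0 (sub_nonneg.2 hy1)) (sub_nonneg.2 h.le)]

lemma g2_le_sub {η : ℝ} (hβ : β ∈ Icc (0:ℝ) 1) (hη : 0 ≤ η) (hcy : (1 + β) / 2 ≤ y)
    (hy : y ≤ 1 - η) : g2 β y ≤ y - (1 - β) / 4 * η := by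
  obtain ⟨hβ0, hβ1⟩ := hβ
  have hyβ : (1 - β) / 4 ≤ y * (y - β) := by nlinarith
  have : (1 - β) / 4 * η ≤ y * (y - β) * (1 - y) :=
    mul_le_mul hyβ (by linarith) hη (by nlinarith)
  unfold g2
  nlinarith

end FiberMaps

section Descent

variable {β η : ℝ}

lemma g2_mapsTo (hβ : β ∈ Icc (0:ℝ) 1) : MapsTo (g2 β) (Icc 0 1) (Icc 0 1) :=
  fun _ hy => g2_mem_Icc hβ hy

lemma g2_iterate_le_max (hβ : β ∈ Icc (0:ℝ) 1) (hη : 0 ≤ η) {y : ℝ} (hy : y ∈ Icc 0 (1 - η))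
    (n : ℕ) : (g2 β)^[n] y ≤ max ((1 + β) / 2) (1 - η - n * ((1 - β) / 4 * η)) := by
  have hδ : 0 ≤ (1 - β) / 4 * η := mul_nonneg (by linarith [hβ.2]) hη
  induction n with
  | zero => simpa using Or.inr hy.2
  | succ n ih =>
    have hu : (g2 β)^[n] y ∈ Icc (0:ℝ) 1 :=
      (g2_mapsTo hβ).iterate n ⟨hy.1, by linarith [hy.2]⟩
    rw [Function.iterate_succ_apply']
    rcases le_or_gt ((g2 β)^[n] y) ((1 + β) / 2) with hc | hc
    · exact le_max_of_le_left (g2_le_of_le hβ ⟨hu.1, hc⟩)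
    · have hle : (g2 β)^[n] y ≤ 1 - η - n * ((1 - β) / 4 * η) :=
        (le_max_iff.1 ih).resolve_left hc.not_ge
      have hstep := g2_le_sub hβ hη hc.le (by nlinarith [mul_nonneg n.cast_nonneg hδ])
      refine le_max_of_le_right ?_
      push_cast
      linarith

lemma exists_g2_iterate_le (hβ : β ∈ Ico (0:ℝ) 1) (hη : 0 < η) :
    ∃ N : ℕ, ∀ y ∈ Icc 0 (1 - η), (g2 β)^[N] y ≤ (1 + β) / 2 := by
  have hδ : 0 < (1 - β) / 4 * η := mul_pos (by linarith [hβ.2]) hη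
  obtain ⟨N, hN⟩ := exists_nat_ge (1 / ((1 - β) / 4 * η))
  refine ⟨N, fun y hy => (g2_iterate_le_max (Ico_subset_Icc_self hβ) hη.le hy N).trans ?_⟩
  have : 1 ≤ N * ((1 - β) / 4 * η) := by rwa [div_le_iff₀ hδ] at hN
  exact max_le le_rfl (by linarith [hβ.1])

end Descent

section Doubling

lemma dbl_iterate_eq (k : ℕ) (j : ℤ) {x : ℝ} (hx : x ∈ Icc (0:ℝ) 1)
    (hj : 2 ^ k * x ∈ Ioo (j : ℝ) (j + 1)) : dbl^[k] x = 2 ^ k * x - j := by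
  induction k generalizing j x with
  | zero =>
    simp only [pow_zero, one_mul, mem_Ioo] at hj
    have hj0 : j = 0 := by
      have h1 : (j : ℝ) < 1 := by linarith [hx.2]
      have h2 : (-1 : ℝ) < j := by linarith [hx.1]
      have : j < 1 := by exact_mod_cast h1
      have : -1 < j := by exact_mod_cast h2
      omega
    simp [hj0]
  | succ k ih =>
    rw [Function.iterate_succ_apply]
    rw [pow_succ, mul_assoc] at hj ⊢
    by_cases hhalf : x ≤ 1 / 2
    · rw [show dbl x = 2 * x from if_pos hhalf, ih j ⟨by linarith [hx.1], by linarith⟩ hj]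
    · have hj' : 2 ^ k * (2 * x - 1) ∈ Ioo ((j - 2 ^ k : ℤ) : ℝ) ((j - 2 ^ k : ℤ) + 1) := by
        push_cast
        constructor <;> linarith [hj.1, hj.2]
      rw [show dbl x = 2 * x - 1 from if_neg hhalf,
        ih (j - 2 ^ k) ⟨by linarith, by linarith [hx.2]⟩ hj']
      push_cast
      ring

lemma exists_int_mem_Icc_dyadic (k : ℕ) {t : ℝ} (ht : t ∈ Icc (0:ℝ) 1) :
    ∃ j : ℤ, 0 ≤ j ∧ (j : ℝ) + 1 ≤ 2 ^ k ∧ 2 ^ k * t ∈ Icc (j : ℝ) (j + 1) := by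
  rcases ht.2.lt_or_eq with ht1 | rfl
  · refine ⟨⌊2 ^ k * t⌋, Int.floor_nonneg.2 (by positivity [ht.1]), ?_,
      Int.floor_le _, (Int.lt_floor_add_one _).le⟩
    have : ⌊(2:ℝ) ^ k * t⌋ < (2 ^ k : ℤ) := by
      rw [Int.floor_lt]; push_cast; nlinarith [pow_pos (two_pos (α := ℝ)) k]
    have : ⌊(2:ℝ) ^ k * t⌋ + 1 ≤ (2 ^ k : ℤ) := this
    exact_mod_cast this
  · refine ⟨2 ^ k - 1, by have : (1:ℤ) ≤ 2 ^ k := one_le_pow₀ (by norm_num); omega, by push_cast; linarith, ?_⟩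
    push_cast
    constructor <;> linarith

lemma exists_Ioo_dbl_iterate_mem (k N : ℕ) {t : ℝ} (ht : t ∈ Icc (0:ℝ) 1) :
    ∃ a b : ℝ, a < b ∧ ∀ x ∈ Ioo a b, x ∈ Icc (0:ℝ) 1 ∧ dist x t ≤ (1 / 2) ^ k ∧
      dbl^[k] x ∈ Ioo (1 - (1 / 2) ^ N) 1 := by
  obtain ⟨j, hj0, hj1, hjt⟩ := exists_int_mem_Icc_dyadic k ht
  have h2k : (0:ℝ) < 2 ^ k := by positivity
  have hN0 : (0:ℝ) < (1 / 2) ^ N := by positivity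
  have hN1 : ((1:ℝ) / 2) ^ N ≤ 1 := pow_le_one₀ (by norm_num) (by norm_num)
  have hj0' : (0:ℝ) ≤ j := by exact_mod_cast hj0
  refine ⟨(j + 1 - (1 / 2) ^ N) / 2 ^ k, (j + 1) / 2 ^ k, by gcongr; linarith, ?_⟩
  rintro x ⟨hxa, hxb⟩
  rw [div_lt_iff₀' h2k] at hxa
  rw [lt_div_iff₀' h2k] at hxb
  have hx : x ∈ Icc (0:ℝ) 1 := ⟨by nlinarith, by nlinarith⟩
  refine ⟨hx, ?_, ?_⟩
  · rw [Real.dist_eq, one_div_pow, le_div_iff₀ h2k, ← abs_of_pos h2k, ← abs_mul, sub_mul,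
      abs_le]
    constructor <;> linarith [hjt.1, hjt.2]
  · rw [dbl_iterate_eq k j hx ⟨by linarith, hxb⟩]
    constructor <;> linarith

end Doubling

section SkewProduct

variable {β1 β2 : ℝ}

lemma Fsk_iterate_fst (p : ℝ × ℝ) (n : ℕ) : ((Fsk β1 β2)^[n] p).1 = dbl^[n] p.1 := by
  induction n with
  | zero => rfl
  | succ n ih =>
    rw [Function.iterate_succ_apply', Function.iterate_succ_apply', ← ih]
    unfold Fsk
    split_ifs <;> rfl

lemma Fsk_iterate_snd_eq_g2_iterate (N : ℕ) {q : ℝ × ℝ} (hq : q.1 ∈ Ioo (1 - (1 / 2) ^ N) 1) :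
    ((Fsk β1 β2)^[N] q).2 = (g2 β2)^[N] q.2 := by
  induction N generalizing q with
  | zero => rfl
  | succ N ih =>
    obtain ⟨hq1, hq2⟩ := hq
    have hhalf : ((1:ℝ) / 2) ^ (N + 1) ≤ 1 / 2 := pow_le_of_le_one (by norm_num) (by norm_num) (by omega)
    have hx : ¬ q.1 ≤ 1 / 2 := by linarith
    have hF : Fsk β1 β2 q = (2 * q.1 - 1, g2 β2 q.2) := by
      unfold Fsk dbl; rw [if_neg hx, if_neg hx]
    rw [Function.iterate_succ_apply, Function.iterate_succ_apply, hF, ih]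
    rw [pow_succ] at hq1
    constructor <;> linarith

lemma Fsk_mapsTo (hβ1 : β1 ∈ Icc (0:ℝ) 1) (hβ2 : β2 ∈ Icc (0:ℝ) 1) :
    MapsTo (Fsk β1 β2) {q | q.2 ∈ Icc (0:ℝ) 1} {q | q.2 ∈ Icc (0:ℝ) 1} := by
  intro q hq
  unfold Fsk
  split_ifs
  · exact g1_mem_Icc hβ1 hq
  · exact g2_mem_Icc hβ2 hq

lemma mul_one_sub_le_one_sub_Fsk_snd (hβ1 : β1 ∈ Icc (0:ℝ) 1) (hβ2 : β2 ∈ Icc (0:ℝ) 1)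
    {q : ℝ × ℝ} (hq : q.2 ∈ Icc (0:ℝ) 1) :
    β1 * (1 - β2) * (1 - q.2) ≤ 1 - (Fsk β1 β2 q).2 := by
  obtain ⟨hβ10, hβ11⟩ := hβ1
  obtain ⟨hβ20, hβ21⟩ := hβ2
  have hy := sub_nonneg.2 hq.2
  unfold Fsk
  split_ifs
  · nlinarith [one_sub_g1_ge hβ11 hq.1, mul_nonneg (mul_nonneg hβ10 hβ20) hy]
  · nlinarith [one_sub_g2_ge hβ20 hq.2, mul_nonneg (mul_nonneg (sub_nonneg.2 hβ11)
      (sub_nonneg.2 hβ21)) hy]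

lemma pow_mul_one_sub_le_one_sub_Fsk_iterate_snd (hβ1 : β1 ∈ Icc (0:ℝ) 1)
    (hβ2 : β2 ∈ Icc (0:ℝ) 1) {q : ℝ × ℝ} (hq : q.2 ∈ Icc (0:ℝ) 1) (n : ℕ) :
    (β1 * (1 - β2)) ^ n * (1 - q.2) ≤ 1 - ((Fsk β1 β2)^[n] q).2 := by
  induction n with
  | zero => simp
  | succ n ih =>
    have hm : 0 ≤ β1 * (1 - β2) := mul_nonneg hβ1.1 (sub_nonneg.2 hβ2.2)
    rw [Function.iterate_succ_apply', pow_succ', mul_assoc]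
    exact (mul_le_mul_of_nonneg_left ih hm).trans
      (mul_one_sub_le_one_sub_Fsk_snd hβ1 hβ2 ((Fsk_mapsTo hβ1 hβ2).iterate n hq))

lemma Fsk_iterate_snd_le (hβ1 : β1 ∈ Icc (0:ℝ) 1) (hβ2 : β2 ∈ Icc (0:ℝ) 1) {k N : ℕ}
    {η c x y : ℝ} (hN : ∀ y ∈ Icc 0 (1 - η), (g2 β2)^[N] y ≤ c)
    (hx : dbl^[k] x ∈ Ioo (1 - (1 / 2) ^ N) 1) (hy : y ∈ Icc (0:ℝ) 1)
    (hη : η ≤ (β1 * (1 - β2)) ^ k * (1 - y)) :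
    ((Fsk β1 β2)^[N + k] (x, y)).2 ≤ c := by
  have hfst : ((Fsk β1 β2)^[k] (x, y)).1 ∈ Ioo (1 - (1 / 2) ^ N) 1 := by
    rwa [Fsk_iterate_fst]
  have hsnd : ((Fsk β1 β2)^[k] (x, y)).2 ∈ Icc (0:ℝ) 1 := (Fsk_mapsTo hβ1 hβ2).iterate k hy
  have hfar := pow_mul_one_sub_le_one_sub_Fsk_iterate_snd hβ1 hβ2 (q := (x, y)) hy k
  rw [Function.iterate_add_apply, Fsk_iterate_snd_eq_g2_iterate N hfst]
  exact hN _ ⟨hsnd.1, by linarith⟩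

end SkewProduct

theorem stmt8_general (β1 β2 : ℝ) (hβ1 : β1 ∈ Set.Ioo (0:ℝ) 1) (hβ2 : β2 ∈ Set.Ioo (0:ℝ) 1) :
    ∃ U : Set (ℝ × ℝ), (∃ V : Set (ℝ × ℝ), IsOpen V ∧ U = V ∩ unitSq) ∧ A1 ⊆ U ∧
      ∀ p ∈ A1, ∀ ε > (0:ℝ),
        0 < volume {q : ℝ × ℝ | q ∈ unitSq ∧ dist q p < ε ∧
          ∃ n : ℕ, (Fsk β1 β2)^[n] q ∉ U} := by
  refine ⟨{q | (1 + β2) / 2 < q.2} ∩ unitSq,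
    ⟨_, isOpen_lt continuous_const continuous_snd, rfl⟩, ?_, ?_⟩
  · rintro ⟨t, _⟩ ⟨ht, rfl⟩
    exact ⟨show (1 + β2) / 2 < 1 by linarith [hβ2.2], ht, by simp⟩
  rintro ⟨t, _⟩ ⟨ht, rfl⟩ ε hε
  obtain ⟨k, hk⟩ := exists_pow_lt_of_lt_one hε (by norm_num : (1 / 2 : ℝ) < 1)
  set s := min ε 1
  have hs : 0 < s := lt_min hε one_pos
  have hm : 0 < β1 * (1 - β2) := mul_pos hβ1.1 (by linarith [hβ2.2])
  obtain ⟨N, hN⟩ := exists_g2_iterate_le (Ioo_subset_Ico_self hβ2)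
    (by positivity : 0 < (β1 * (1 - β2)) ^ k * (s / 2))
  obtain ⟨a, b, hab, hx⟩ := exists_Ioo_dbl_iterate_mem k N ht
  refine ((isOpen_Ioo.prod isOpen_Ioo).measure_pos volume
    ((nonempty_Ioo.2 hab).prod (nonempty_Ioo.2 (by linarith : 1 - s < 1 - s / 2)))).trans_le
    (measure_mono ?_)
  rintro ⟨x, y⟩ ⟨hxab, hys, hys'⟩
  obtain ⟨hx01, hxt, hxk⟩ := hx x hxab
  have hy : y ∈ Icc (0:ℝ) 1 := ⟨by linarith [min_le_right ε 1], by linarith⟩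
  refine ⟨⟨hx01, hy⟩, max_lt (hxt.trans_lt hk) ?_, N + k, fun hU => not_lt.2 ?_ (show (1 + β2) / 2 < _ from hU.1)⟩
  · rw [Real.dist_eq, abs_lt]; constructor <;> linarith [min_le_left ε 1]
  · exact Fsk_iterate_snd_le (Ioo_subset_Icc_self hβ1) (Ioo_subset_Icc_self hβ2) hN hxk hy
      (mul_le_mul_of_nonneg_left (by linarith) (pow_pos hm k).le)

theorem stmt8 (β1 β2 : ℝ) (hβ1 : β1 ∈ Set.Ioo (0:ℝ) 1) (hβ2 : β2 ∈ Set.Ioo (0:ℝ) 1)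
    (hcond : β1 * (2 - β2) < 1) :
    ∃ U : Set (ℝ × ℝ), (∃ V : Set (ℝ × ℝ), IsOpen V ∧ U = V ∩ unitSq) ∧ A1 ⊆ U ∧
      ∀ p ∈ A1, ∀ ε > (0:ℝ),
        0 < volume {q : ℝ × ℝ | q ∈ unitSq ∧ dist q p < ε ∧
          ∃ n : ℕ, (Fsk β1 β2)^[n] q ∉ U} :=
  stmt8_general β1 β2 hβ1 hβ2
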